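/- arXiv:2312.16756 — 4 statements merged into one kernel-verified Lean document; each statement's English description precedes it below -/
import Mathlib

section
/- With s(ν, t) as above, if t ≥ Σ_k (μ_k² + σ_k²), then ∂s/∂ν > 0 for all ν > 0, so s(·, t) is strictly increasing in ν on (0, ∞), and consequently inf_{ν>0} s(ν, t) = lim_{ν→0⁺} s(ν, t) = 1. -/
/-! The logarithm of `s(·, t)` is `ν t − Σ μ_k² ν / (1 + 2σ_k² ν) − ½ Σ log (1 + 2σ_k² ν)`,
whose derivative is `t − Σ (μ_k² / (1 + 2σ_k² ν)² + σ_k² / (1 + 2σ_k² ν))`. For `ν > 0` every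
summand is strictly below `μ_k² + σ_k²`, so the derivative is positive as soon as
`t ≥ Σ (μ_k² + σ_k²)`. Hence `s(·, t)` is strictly increasing on `[0, ∞)`, and its infimum over
`(0, ∞)` is its value `s(0, t) = 1`, which is also its limit at `0⁺`. -/

open Filter Set

theorem MonotoneOn.csInf_image_Ioi_eq {α β : Type*} [TopologicalSpace α] [Preorder α]
    [ConditionallyCompleteLinearOrder β] [TopologicalSpace β] [OrderTopology β]
    {f : α → β} {a : α} [(nhdsWithin a (Ioi a)).NeBot] (hf : MonotoneOn f (Ici a))
    (hfa : ContinuousWithinAt f (Ioi a) a) : sInf (f '' Ioi a) = f a := by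
  have hlower : f a ∈ lowerBounds (f '' Ioi a) := by
    rintro _ ⟨x, hx, rfl⟩
    exact hf self_mem_Ici (Ioi_subset_Ici_self hx) (le_of_lt hx)
  have hmem : ∀ᶠ x in nhdsWithin a (Ioi a), f x ∈ f '' Ioi a :=
    eventually_mem_nhdsWithin.mono fun _ hx => mem_image_of_mem f hx
  have hne : (f '' Ioi a).Nonempty :=
    (Filter.nonempty_of_mem (self_mem_nhdsWithin (a := a))).image f
  exact (isGLB_of_mem_closure hlower (mem_closure_of_tendsto hfa hmem)).csInf_eq hne

namespace Chernoff

variable {ι : Type*} [Fintype ι] (μ v : ι → ℝ) (t : ℝ)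

/-- `s(ν, t) = e^{ν t} 𝔼 exp (−ν Σ X_k²)` for independent `X_k ∼ 𝒩(μ_k, v_k)`: the Chernoff
bound for `ℙ(Σ X_k² ≤ t)`. -/
noncomputable def bound (ν : ℝ) : ℝ :=
  Real.exp (ν * t - ∑ k, μ k ^ 2 * ν / (1 + 2 * v k * ν)) / ∏ k, √(1 + 2 * v k * ν)

noncomputable def logBound (ν : ℝ) : ℝ :=
  ν * t - ∑ k, μ k ^ 2 * ν / (1 + 2 * v k * ν) - ∑ k, Real.log (1 + 2 * v k * ν) / 2

noncomputable def derivLogBound (ν : ℝ) : ℝ :=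
  t - ∑ k, (μ k ^ 2 / (1 + 2 * v k * ν) ^ 2 + v k / (1 + 2 * v k * ν))

variable {μ v t}

lemma bound_eq_exp_logBound (hv : ∀ k, 0 ≤ v k) {ν : ℝ} (hν : 0 ≤ ν) :
    bound μ v t ν = Real.exp (logBound μ v t ν) := by
  have hsqrt (k : ι) : √(1 + 2 * v k * ν) = Real.exp (Real.log (1 + 2 * v k * ν) / 2) := by
    have hpos : 0 < 1 + 2 * v k * ν := by have := hv k; positivity
    rw [← Real.log_sqrt hpos.le, Real.exp_log (Real.sqrt_pos.mpr hpos)]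
  simp only [bound, logBound, hsqrt, ← Real.exp_sum, ← Real.exp_sub]

lemma hasDerivAt_mul_div_one_add_mul (a b : ℝ) {x : ℝ} (hx : 1 + b * x ≠ 0) :
    HasDerivAt (fun y => a * y / (1 + b * y)) (a / (1 + b * x) ^ 2) x := by
  have hnum : HasDerivAt (fun y => a * y) a x := by simpa using (hasDerivAt_id x).const_mul a
  have hden : HasDerivAt (fun y => 1 + b * y) b x := by
    simpa using ((hasDerivAt_id x).const_mul b).const_add 1
  refine (hnum.div hden hx).congr_deriv ?_
  ring

lemma hasDerivAt_log_one_add_two_mul_div_two (b : ℝ) {x : ℝ} (hx : 1 + 2 * b * x ≠ 0) :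
    HasDerivAt (fun y => Real.log (1 + 2 * b * y) / 2) (b / (1 + 2 * b * x)) x := by
  have hden : HasDerivAt (fun y => 1 + 2 * b * y) (2 * b) x := by
    simpa using ((hasDerivAt_id x).const_mul (2 * b)).const_add 1
  refine ((hden.log hx).div_const 2).congr_deriv ?_
  ring

lemma hasDerivAt_logBound (hv : ∀ k, 0 ≤ v k) {ν : ℝ} (hν : 0 ≤ ν) :
    HasDerivAt (logBound μ v t) (derivLogBound μ v t ν) ν := by
  have hne : ∀ k, 1 + 2 * v k * ν ≠ 0 := fun k => by have := hv k; positivity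
  have hlin : HasDerivAt (fun x => x * t) t ν := by simpa using (hasDerivAt_id ν).mul_const t
  have hfrac := HasDerivAt.fun_sum (u := Finset.univ) fun k _ =>
    hasDerivAt_mul_div_one_add_mul (μ k ^ 2) (2 * v k) (hne k)
  have hlog := HasDerivAt.fun_sum (u := Finset.univ) fun k _ =>
    hasDerivAt_log_one_add_two_mul_div_two (v k) (hne k)
  refine ((hlin.sub hfrac).sub hlog).congr_deriv ?_
  rw [derivLogBound, Finset.sum_add_distrib]
  ring

lemma sq_div_sq_add_div_lt (m : ℝ) {b ν : ℝ} (hb : 0 < b) (hν : 0 < ν) :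
    m ^ 2 / (1 + 2 * b * ν) ^ 2 + b / (1 + 2 * b * ν) < m ^ 2 + b := by
  have hc : 1 < 1 + 2 * b * ν := by nlinarith [mul_pos hb hν]
  have hmean : m ^ 2 / (1 + 2 * b * ν) ^ 2 ≤ m ^ 2 :=
    div_le_self (sq_nonneg m) (one_le_pow₀ hc.le)
  have hvar : b / (1 + 2 * b * ν) < b := div_lt_self hb hc
  linarith

lemma derivLogBound_pos [Nonempty ι] (hv : ∀ k, 0 < v k) (ht : ∑ k, (μ k ^ 2 + v k) ≤ t)
    {ν : ℝ} (hν : 0 < ν) : 0 < derivLogBound μ v t ν := by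
  have := Finset.sum_lt_sum_of_nonempty Finset.univ_nonempty fun k _ =>
    sq_div_sq_add_div_lt (μ k) (hv k) hν
  rw [derivLogBound]
  linarith

lemma bound_zero : bound μ v t 0 = 1 := by simp [bound]

lemma continuousOn_bound (hv : ∀ k, 0 ≤ v k) : ContinuousOn (bound μ v t) (Ici 0) :=
  fun _ hν => ((hasDerivAt_logBound hv hν).continuousAt.continuousWithinAt.rexp).congr
    (fun _ hx => bound_eq_exp_logBound hv hx) (bound_eq_exp_logBound hv hν)

lemma hasDerivAt_bound (hv : ∀ k, 0 ≤ v k) {ν : ℝ} (hν : 0 < ν) :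
    HasDerivAt (bound μ v t) (bound μ v t ν * derivLogBound μ v t ν) ν := by
  have heq : bound μ v t =ᶠ[nhds ν] fun x => Real.exp (logBound μ v t x) :=
    eventually_of_mem (Ioi_mem_nhds hν) fun x hx => bound_eq_exp_logBound hv (le_of_lt hx)
  rw [bound_eq_exp_logBound hv hν.le]
  exact (hasDerivAt_logBound hv hν.le).exp.congr_of_eventuallyEq heq

lemma deriv_bound_pos [Nonempty ι] (hv : ∀ k, 0 < v k) (ht : ∑ k, (μ k ^ 2 + v k) ≤ t)
    {ν : ℝ} (hν : 0 < ν) : 0 < deriv (bound μ v t) ν := by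
  have hv' : ∀ k, 0 ≤ v k := fun k => (hv k).le
  rw [(hasDerivAt_bound hv' hν).deriv, bound_eq_exp_logBound hv' hν.le]
  exact mul_pos (Real.exp_pos _) (derivLogBound_pos hv ht hν)

lemma strictMonoOn_bound [Nonempty ι] (hv : ∀ k, 0 < v k) (ht : ∑ k, (μ k ^ 2 + v k) ≤ t) :
    StrictMonoOn (bound μ v t) (Ici 0) :=
  strictMonoOn_of_deriv_pos (convex_Ici 0) (continuousOn_bound fun k => (hv k).le)
    fun ν hν => deriv_bound_pos hv ht (by rwa [interior_Ici] at hν)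

end Chernoff

open Chernoff in
/-- If t ≥ Σ_k (μ_k² + σ_k²), then ∂s/∂ν > 0 on (0,∞), s(·,t) is strictly
increasing on (0,∞), and inf_{ν>0} s(ν,t) = lim_{ν→0⁺} s(ν,t) = 1. -/
theorem stmt5 (K : ℕ) (hK : 0 < K) (μ v : Fin K → ℝ) (hv : ∀ k, 0 < v k) (t : ℝ)
    (ht : ∑ k, ((μ k) ^ 2 + v k) ≤ t)
    (s : ℝ → ℝ)
    (hs : s = fun ν =>
      Real.exp (ν * t - ∑ k, (μ k) ^ 2 * ν / (1 + 2 * v k * ν)) /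
        ∏ k, Real.sqrt (1 + 2 * v k * ν)) :
    (∀ ν > (0 : ℝ), 0 < deriv s ν) ∧ StrictMonoOn s (Ioi 0) ∧
      Tendsto s (nhdsWithin 0 (Ioi 0)) (nhds 1) ∧ sInf (s '' Ioi 0) = 1 := by
  have : Nonempty (Fin K) := Fin.pos_iff_nonempty.mp hK
  change s = bound μ v t at hs
  subst hs
  have hmono := strictMonoOn_bound hv ht
  have hlim : ContinuousWithinAt (bound μ v t) (Ioi 0) 0 :=
    (continuousOn_bound (fun k => (hv k).le) 0 self_mem_Ici).mono Ioi_subset_Ici_self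
  refine ⟨fun ν hν => deriv_bound_pos hv ht hν, hmono.mono Ioi_subset_Ici_self, ?_, ?_⟩
  · simpa only [ContinuousWithinAt, bound_zero] using hlim
  · rw [hmono.monotoneOn.csInf_image_Ioi_eq hlim, bound_zero]
end

section
/- Define F(t) = inf_{ν>0} s(ν, t) where s(ν, t) = exp(ν t − Σ_k μ_k² ν/(1+2σ_k² ν)) Π_k (1+2σ_k² ν)^{−1/2}. Then F is monotonically increasing on (0, Σ_k(μ_k² + σ_k²)), with F(t) → 0 as t → 0⁺ and F(t) → 1 as t → Σ_k(μ_k² + σ_k²). Hence for every ε ∈ (0,1) there exists a unique Chernoff lower bound t = β⊥ ∈ (0, Σ_k(μ_k² + σ_k²)) with F(β⊥) = ε. -/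
open Filter Set Topology

/-!
Writing `Λ(ν) = ∑ₖ (μₖ² ν / (1 + 2σₖ² ν) + log (1 + 2σₖ² ν) / 2)`, we have `s(ν, t) = exp (ν t - Λ ν)`,
so `F = exp ∘ G` with `G t = inf_{ν > 0} (ν t - Λ ν)`. As an infimum of affine functions of `t`, `G` is
concave, hence continuous, on `t > 0` (it is finite there because `Λ` grows at most like `√ν`).
The bounds `S ν - C ν² ≤ Λ ν ≤ S ν`, with `S = ∑ₖ (μₖ² + σₖ²)`, give `G S = 0` and `G t < 0` for
`t < S`; a concave function lying strictly below its value at the right end point is strictly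
increasing. Finally `Λ ν → ∞` forces `G t ≤ 1 - Λ (1 / t) → -∞` as `t → 0⁺`, and the intermediate
value theorem produces `β⊥`.
-/

lemma ConcaveOn.ciInf {ι E : Type*} [Nonempty ι] [AddCommMonoid E] [Module ℝ E] {s : Set E}
    {f : ι → E → ℝ} (hf : ∀ i, ConcaveOn ℝ s (f i))
    (hbdd : ∀ x ∈ s, BddBelow (range fun i => f i x)) :
    ConcaveOn ℝ s fun x => ⨅ i, f i x := by
  refine ⟨(hf (Classical.arbitrary ι)).1, fun x hx y hy a b ha hb hab => le_ciInf fun i => ?_⟩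
  calc a • (⨅ i, f i x) + b • (⨅ i, f i y) ≤ a • f i x + b • f i y := by
        gcongr
        exacts [ciInf_le (hbdd x hx) i, ciInf_le (hbdd y hy) i]
    _ ≤ f i (a • x + b • y) := (hf i).2 hx hy ha hb hab

lemma ConcaveOn.strictMonoOn_Ioo {f : ℝ → ℝ} {a b : ℝ} (hf : ConcaveOn ℝ (Ioc a b) f)
    (hlt : ∀ x ∈ Ioo a b, f x < f b) : StrictMonoOn f (Ioo a b) := by
  intro x hx y hy hxy
  have hslope := hf.slope_anti_adjacent ⟨hx.1, hx.2.le⟩ ⟨hx.1.trans hx.2, le_rfl⟩ hxy hy.2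
  have hright : 0 < (f b - f y) / (b - y) := div_pos (by linarith [hlt y hy]) (by linarith [hy.2])
  by_contra! hyx
  have hleft : (f y - f x) / (y - x) ≤ 0 := div_nonpos_of_nonpos_of_nonneg (by linarith) (by linarith)
  linarith

lemma Real.sub_sq_le_log_one_add {x : ℝ} (hx : 0 ≤ x) : x - x ^ 2 ≤ Real.log (1 + x) := by
  have h := Real.one_sub_inv_le_log_of_pos (show 0 < 1 + x by linarith)
  have hinv : 1 - (1 + x)⁻¹ = x - x ^ 2 + x ^ 3 / (1 + x) := by field_simp; ring
  have hcube : 0 ≤ x ^ 3 / (1 + x) := by positivity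
  linarith

lemma Real.log_one_add_div_two_le_sqrt {x : ℝ} (hx : 0 ≤ x) : Real.log (1 + x) / 2 ≤ √x := by
  have hpos : 0 < 1 + x := by linarith
  have hsqrt : √(1 + x) ≤ 1 + √x := by
    rw [Real.sqrt_le_iff]
    refine ⟨by positivity, ?_⟩
    nlinarith [Real.sq_sqrt hx, Real.sqrt_nonneg x]
  rw [← Real.log_sqrt hpos.le]
  linarith [Real.log_le_sub_one_of_pos (Real.sqrt_pos.2 hpos)]

/-- `-log 𝔼 exp (-ν X²)` for `X ∼ 𝒩(m, w)`. -/
noncomputable def negCGF (m w ν : ℝ) : ℝ :=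
  m ^ 2 * ν / (1 + 2 * w * ν) + Real.log (1 + 2 * w * ν) / 2

section negCGF

variable {m w ν : ℝ}

lemma log_div_two_le_negCGF (hw : 0 ≤ w) (hν : 0 ≤ ν) :
    Real.log (1 + 2 * w * ν) / 2 ≤ negCGF m w ν := by
  have : 0 ≤ m ^ 2 * ν / (1 + 2 * w * ν) := by positivity
  rw [negCGF]
  linarith

lemma negCGF_nonneg (hw : 0 ≤ w) (hν : 0 ≤ ν) : 0 ≤ negCGF m w ν :=
  (div_nonneg (Real.log_nonneg (by nlinarith)) zero_le_two).trans (log_div_two_le_negCGF hw hν)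

lemma negCGF_le (hw : 0 ≤ w) (hν : 0 ≤ ν) : negCGF m w ν ≤ (m ^ 2 + w) * ν := by
  have hfrac : m ^ 2 * ν / (1 + 2 * w * ν) ≤ m ^ 2 * ν :=
    div_le_self (by positivity) (by nlinarith)
  have hlog := Real.log_le_sub_one_of_pos (show 0 < 1 + 2 * w * ν by positivity)
  rw [negCGF]
  linarith

lemma sub_le_negCGF (hw : 0 ≤ w) (hν : 0 ≤ ν) :
    (m ^ 2 + w) * ν - 2 * w * (m ^ 2 + w) * ν ^ 2 ≤ negCGF m w ν := by
  have hfrac : m ^ 2 * ν - 2 * w * m ^ 2 * ν ^ 2 ≤ m ^ 2 * ν / (1 + 2 * w * ν) := by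
    rw [le_div_iff₀ (by positivity)]
    nlinarith [show 0 ≤ m ^ 2 * w ^ 2 * ν ^ 3 by positivity]
  have hlog := Real.sub_sq_le_log_one_add (show 0 ≤ 2 * w * ν by positivity)
  rw [negCGF]
  nlinarith

lemma negCGF_le_add_sqrt (hw : 0 < w) (hν : 0 ≤ ν) :
    negCGF m w ν ≤ m ^ 2 / (2 * w) + √(2 * w) * √ν := by
  have hfrac : m ^ 2 * ν / (1 + 2 * w * ν) ≤ m ^ 2 / (2 * w) := by
    rw [div_le_div_iff₀ (by positivity) (by positivity)]
    nlinarith [sq_nonneg m]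
  have hlog := Real.log_one_add_div_two_le_sqrt (show 0 ≤ 2 * w * ν by positivity)
  rw [Real.sqrt_mul (by positivity)] at hlog
  rw [negCGF]
  linarith

end negCGF

noncomputable def chernoffExponent {ι : Type*} [Fintype ι] (μ v : ι → ℝ) (t : ℝ) : ℝ :=
  ⨅ ν : Ioi (0 : ℝ), ν * t - ∑ k, negCGF (μ k) (v k) ν

section chernoffExponent

variable {ι : Type*} [Fintype ι] {μ v : ι → ℝ} {t ν : ℝ}

lemma exp_sub_sum_negCGF (hv : ∀ k, 0 ≤ v k) (hν : 0 ≤ ν) (t : ℝ) :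
    Real.exp (ν * t - ∑ k, negCGF (μ k) (v k) ν) =
      Real.exp (ν * t - ∑ k, μ k ^ 2 * ν / (1 + 2 * v k * ν)) /
        ∏ k, √(1 + 2 * v k * ν) := by
  have hsqrt : ∀ k, √(1 + 2 * v k * ν) = Real.exp (Real.log (1 + 2 * v k * ν) / 2) := fun k => by
    have hpos : 0 < 1 + 2 * v k * ν := by nlinarith [hv k]
    rw [← Real.log_sqrt hpos.le, Real.exp_log (Real.sqrt_pos.2 hpos)]
  simp only [hsqrt, ← Real.exp_sum, ← Real.exp_sub, negCGF, Finset.sum_add_distrib]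
  ring_nf

lemma bddBelow_range_chernoff (hv : ∀ k, 0 < v k) (ht : 0 < t) :
    BddBelow (range fun ν : Ioi (0 : ℝ) => ν * t - ∑ k, negCGF (μ k) (v k) ν) := by
  set A := ∑ k, μ k ^ 2 / (2 * v k)
  set B := ∑ k, √(2 * v k)
  refine ⟨-A - B ^ 2 / (4 * t), ?_⟩
  rintro _ ⟨⟨ν, hν⟩, rfl⟩
  have hΛ : ∑ k, negCGF (μ k) (v k) ν ≤ A + B * √ν := by
    rw [Finset.sum_mul, ← Finset.sum_add_distrib]
    exact Finset.sum_le_sum fun k _ => negCGF_le_add_sqrt (hv k) (le_of_lt hν)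
  have hsq : (2 * t * √ν - B) ^ 2 / (4 * t) = ν * t - B * √ν + B ^ 2 / (4 * t) := by
    field_simp
    linear_combination (4 * t ^ 2) * Real.sq_sqrt (le_of_lt hν)
  have : 0 ≤ (2 * t * √ν - B) ^ 2 / (4 * t) := by positivity
  dsimp only
  linarith

lemma chernoffExponent_le (hv : ∀ k, 0 < v k) (ht : 0 < t) (hν : 0 < ν) :
    chernoffExponent μ v t ≤ ν * t - ∑ k, negCGF (μ k) (v k) ν :=
  ciInf_le (bddBelow_range_chernoff hv ht) ⟨ν, hν⟩

lemma exp_chernoffExponent (hv : ∀ k, 0 < v k) (ht : 0 < t) :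
    Real.exp (chernoffExponent μ v t) =
      ⨅ ν : Ioi (0 : ℝ), Real.exp (ν * t - ∑ k, negCGF (μ k) (v k) ν) :=
  Monotone.map_ciInf_of_continuousAt Real.continuous_exp.continuousAt Real.exp_monotone
    (bddBelow_range_chernoff hv ht)

lemma concaveOn_chernoffExponent (hv : ∀ k, 0 < v k) :
    ConcaveOn ℝ (Ioi 0) (chernoffExponent μ v) := by
  refine ConcaveOn.ciInf (fun ν => ⟨convex_Ioi 0, fun x _ y _ a b _ _ hab => le_of_eq ?_⟩)
    fun t ht => bddBelow_range_chernoff hv ht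
  simp only [smul_eq_mul]
  linear_combination (-∑ k, negCGF (μ k) (v k) ν) * hab

lemma continuousOn_chernoffExponent (hv : ∀ k, 0 < v k) :
    ContinuousOn (chernoffExponent μ v) (Ioi 0) :=
  (concaveOn_chernoffExponent hv).continuousOn isOpen_Ioi

lemma chernoffExponent_le_mul_sub_add (hv : ∀ k, 0 < v k) (ht : 0 < t) (hν : 0 < ν) :
    chernoffExponent μ v t ≤
      ν * (t - ∑ k, (μ k ^ 2 + v k)) + (∑ k, 2 * v k * (μ k ^ 2 + v k)) * ν ^ 2 := by
  have hΛ : ∑ k, ((μ k ^ 2 + v k) * ν - 2 * v k * (μ k ^ 2 + v k) * ν ^ 2) ≤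
      ∑ k, negCGF (μ k) (v k) ν :=
    Finset.sum_le_sum fun k _ => sub_le_negCGF (hv k).le hν.le
  rw [Finset.sum_sub_distrib, ← Finset.sum_mul, ← Finset.sum_mul] at hΛ
  linarith [chernoffExponent_le (μ := μ) hv ht hν]

lemma chernoffExponent_neg (hv : ∀ k, 0 < v k) (ht : 0 < t) (htS : t < ∑ k, (μ k ^ 2 + v k)) :
    chernoffExponent μ v t < 0 := by
  set S := ∑ k, (μ k ^ 2 + v k)
  set C := ∑ k, 2 * v k * (μ k ^ 2 + v k)
  have hC : 0 ≤ C := Finset.sum_nonneg fun k _ => by have := hv k; positivity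
  have hν : 0 < (S - t) / (C + 1) := div_pos (by linarith) (by linarith)
  have hCν : C * ((S - t) / (C + 1)) < S - t := by
    rw [← mul_div_assoc, div_lt_iff₀ (by linarith)]
    nlinarith
  have := chernoffExponent_le_mul_sub_add (μ := μ) hv ht hν
  nlinarith

lemma chernoffExponent_sum_eq_zero (hv : ∀ k, 0 < v k) (hS : 0 < ∑ k, (μ k ^ 2 + v k)) :
    chernoffExponent μ v (∑ k, (μ k ^ 2 + v k)) = 0 := by
  refine le_antisymm ?_ (le_ciInf fun ⟨ν, hν⟩ => ?_)
  · have hlim : Tendsto (fun ν : ℝ => (∑ k, 2 * v k * (μ k ^ 2 + v k)) * ν ^ 2) (𝓝[>] 0) (𝓝 0) :=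
      ((continuous_const.mul (continuous_pow 2)).tendsto' 0 0 (by simp)).mono_left
        nhdsWithin_le_nhds
    refine ge_of_tendsto hlim ?_
    filter_upwards [self_mem_nhdsWithin] with ν hν
    simpa using chernoffExponent_le_mul_sub_add (μ := μ) hv hS hν
  · have hΛ : ∑ k, negCGF (μ k) (v k) ν ≤ (∑ k, (μ k ^ 2 + v k)) * ν := by
      rw [Finset.sum_mul]
      exact Finset.sum_le_sum fun k _ => negCGF_le (hv k).le (le_of_lt hν)
    dsimp only
    linarith

lemma strictMonoOn_chernoffExponent (hv : ∀ k, 0 < v k) (hS : 0 < ∑ k, (μ k ^ 2 + v k)) :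
    StrictMonoOn (chernoffExponent μ v) (Ioo 0 (∑ k, (μ k ^ 2 + v k))) :=
  ((concaveOn_chernoffExponent hv).subset (fun _ ht => ht.1) (convex_Ioc _ _)).strictMonoOn_Ioo
    fun _ ht => chernoffExponent_sum_eq_zero hv hS ▸ chernoffExponent_neg hv ht.1 ht.2

lemma tendsto_sum_negCGF_atTop [Nonempty ι] (hv : ∀ k, 0 < v k) :
    Tendsto (fun ν => ∑ k, negCGF (μ k) (v k) ν) atTop atTop := by
  obtain ⟨k₀⟩ := ‹Nonempty ι›
  have hlog : Tendsto (fun ν => Real.log (1 + 2 * v k₀ * ν) / 2) atTop atTop :=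
    (Real.tendsto_log_atTop.comp (tendsto_atTop_add_const_left _ 1
      (tendsto_id.const_mul_atTop (by linarith [hv k₀])))).atTop_div_const two_pos
  refine tendsto_atTop_mono' _ ?_ hlog
  filter_upwards [eventually_ge_atTop 0] with ν hν
  calc Real.log (1 + 2 * v k₀ * ν) / 2 ≤ negCGF (μ k₀) (v k₀) ν :=
        log_div_two_le_negCGF (hv k₀).le hν
    _ ≤ ∑ k, negCGF (μ k) (v k) ν :=
        Finset.single_le_sum (fun k _ => negCGF_nonneg (hv k).le hν) (Finset.mem_univ k₀)

lemma tendsto_chernoffExponent_nhdsGT_zero [Nonempty ι] (hv : ∀ k, 0 < v k) :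
    Tendsto (chernoffExponent μ v) (𝓝[>] 0) atBot := by
  have hbound : Tendsto (fun t : ℝ => 1 - ∑ k, negCGF (μ k) (v k) t⁻¹) (𝓝[>] 0) atBot :=
    (tendsto_atBot_add_const_left _ 1 (tendsto_neg_atTop_atBot.comp
      ((tendsto_sum_negCGF_atTop hv).comp tendsto_inv_nhdsGT_zero))).congr
      fun t => (sub_eq_add_neg _ _).symm
  refine tendsto_atBot_mono' _ ?_ hbound
  filter_upwards [self_mem_nhdsWithin] with t (ht : 0 < t)
  simpa [inv_mul_cancel₀ ht.ne'] using chernoffExponent_le (μ := μ) hv ht (inv_pos.2 ht)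

end chernoffExponent

/-- F(t) = inf_{ν>0} s(ν,t) is monotonically increasing on
(0, Σ_k(μ_k²+σ_k²)), F(t)→0 as t→0⁺, F(t)→1 as t→Σ_k(μ_k²+σ_k²)⁻, and for every
ε ∈ (0,1) there is a unique β⊥ in that interval with F(β⊥) = ε. -/
theorem stmt10 (K : ℕ) (hK : 0 < K) (μ v : Fin K → ℝ) (hv : ∀ k, 0 < v k)
    (s : ℝ → ℝ → ℝ)
    (hs : s = fun ν t =>
      Real.exp (ν * t - ∑ k, (μ k) ^ 2 * ν / (1 + 2 * v k * ν)) /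
        ∏ k, Real.sqrt (1 + 2 * v k * ν))
    (F : ℝ → ℝ) (hF : F = fun t => ⨅ ν : Ioi (0 : ℝ), s ν t) :
    MonotoneOn F (Ioo 0 (∑ k, ((μ k) ^ 2 + v k))) ∧
      Tendsto F (nhdsWithin 0 (Ioi 0)) (nhds 0) ∧
      Tendsto F (nhdsWithin (∑ k, ((μ k) ^ 2 + v k)) (Iio (∑ k, ((μ k) ^ 2 + v k)))) (nhds 1) ∧
      ∀ ε : ℝ, 0 < ε → ε < 1 →
        ∃! t : ℝ, t ∈ Ioo 0 (∑ k, ((μ k) ^ 2 + v k)) ∧ F t = ε := by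
  have : Nonempty (Fin K) := Fin.pos_iff_nonempty.1 hK
  set S := ∑ k, (μ k ^ 2 + v k)
  have hS : 0 < S := Finset.sum_pos (fun k _ => by nlinarith [hv k]) Finset.univ_nonempty
  have hFG : EqOn F (Real.exp ∘ chernoffExponent μ v) (Ioi 0) := fun t ht => by
    simp only [hF, hs, Function.comp_apply, exp_chernoffExponent hv ht]
    exact iInf_congr fun ν => (exp_sub_sum_negCGF (fun k => (hv k).le) (le_of_lt ν.2) t).symm
  have hcont : ContinuousOn F (Ioi 0) :=
    (Real.continuous_exp.comp_continuousOn (continuousOn_chernoffExponent hv)).congr hFG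
  have hmono : StrictMonoOn F (Ioo 0 S) := fun a ha b hb hab => by
    rw [hFG ha.1, hFG hb.1]
    exact Real.exp_strictMono (strictMonoOn_chernoffExponent hv hS ha hb hab)
  have hlim0 : Tendsto F (𝓝[>] 0) (𝓝 0) :=
    (Real.tendsto_exp_atBot.comp (tendsto_chernoffExponent_nhdsGT_zero hv)).congr'
      (eventually_mem_nhdsWithin.mono fun t ht => (hFG ht).symm)
  have hFS : F S = 1 := by
    rw [hFG hS, Function.comp_apply, chernoffExponent_sum_eq_zero hv hS, Real.exp_zero]
  have hlimS : Tendsto F (𝓝[<] S) (𝓝 1) :=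
    hFS ▸ (hcont.continuousAt (Ioi_mem_nhds hS)).tendsto.mono_left nhdsWithin_le_nhds
  refine ⟨hmono.monotoneOn, hlim0, hlimS, fun ε hε0 hε1 => ?_⟩
  obtain ⟨t, ht, hFt⟩ := isPreconnected_Ioo.intermediate_value_Ioo
    (le_principal_iff.2 (Ioo_mem_nhdsGT hS)) (le_principal_iff.2 (Ioo_mem_nhdsLT hS))
    (hcont.mono Ioo_subset_Ioi_self) hlim0 hlimS ⟨hε0, hε1⟩
  exact ⟨t, ⟨ht, hFt⟩, fun t' ⟨ht', hFt'⟩ => hmono.injOn ht' ht (hFt'.trans hFt.symm)⟩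
end

section
/- In the non-central case, with λ = t/(M²+Kσ²) and ρ = M²/σ², the optimized Chernoff bound satisfies ε = exp((−λ(ρ+K) − ρ + √(K² + 4λρ(ρ+K)))/2) / ((K + √(K² + 4λρ(ρ+K)))/(2λ(ρ+K)))^{K/2}, i.e., substituting t = λ(M²+Kσ²) and the optimal ν* into s(ν*, t) yields this expression depending only on λ, ρ, and K. -/
open Set

/-!
With `D = √(K²σ⁴ + 4tM²)`, the point `A = 1 + 2σ²ν* = (Kσ² + D)/(2t)` is the positive root of
`t A² - Kσ² A - M² = 0`. Using `M²/A = tA - Kσ²` the exponent `ν*(t - M²/A)` collapses to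
`(2tA - t - M² - Kσ²)/(2σ²) = (D - t - M²)/(2σ²)`. Finally `t`, `M²` and `D` are all `σ²` times
quantities depending only on `λ, ρ, K`, since `D = σ² √(K² + 4λρ(ρ + K))`.
-/

lemma quadratic_formula_root_eq_zero {t b c : ℝ} (ht : t ≠ 0) (hdisc : 0 ≤ b ^ 2 + 4 * t * c) :
    t * ((b + √(b ^ 2 + 4 * t * c)) / (2 * t)) ^ 2
      - b * ((b + √(b ^ 2 + 4 * t * c)) / (2 * t)) - c = 0 := by
  have hsq : discrim t (-b) (-c) = √(b ^ 2 + 4 * t * c) * √(b ^ 2 + 4 * t * c) := by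
    rw [Real.mul_self_sqrt hdisc, discrim]; ring
  linear_combination (quadratic_eq_zero_iff ht hsq _).mpr (Or.inl rfl)

lemma exponent_eq_of_quadratic_root {t b c A ν σ2 : ℝ} (hσ : σ2 ≠ 0) (hA : A ≠ 0)
    (hroot : t * A ^ 2 - b * A - c = 0) (hν : 1 + 2 * σ2 * ν = A) :
    ν * t - ν * c / A = (2 * t * A - t - c - b) / (2 * σ2) := by
  obtain rfl : ν = (A - 1) / (2 * σ2) := by field_simp; linarith
  field_simp
  linear_combination -hroot

lemma sqrt_discrim_eq_mul_sqrt {K σ2 M2 lam ρ t : ℝ} (hσ : 0 < σ2) (hρ : ρ = M2 / σ2)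
    (ht : t = lam * (M2 + K * σ2)) :
    √(K ^ 2 * σ2 ^ 2 + 4 * t * M2) = σ2 * √(K ^ 2 + 4 * lam * ρ * (ρ + K)) := by
  have : K ^ 2 * σ2 ^ 2 + 4 * t * M2 = σ2 ^ 2 * (K ^ 2 + 4 * lam * ρ * (ρ + K)) := by
    rw [ht, hρ]; field_simp
  rw [this, Real.sqrt_mul (by positivity), Real.sqrt_sq hσ.le]

theorem stmt12_general (K : ℕ) (σ2 M2 lam : ℝ) (hσ : 0 < σ2) (hM : 0 < M2)
    (hlam : lam ∈ Ioo (0 : ℝ) 1)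
    (ρ : ℝ) (hρ : ρ = M2 / σ2)
    (t : ℝ) (ht : t = lam * (M2 + K * σ2))
    (νs : ℝ)
    (hνs : νs = (K * σ2 + Real.sqrt ((K : ℝ) ^ 2 * σ2 ^ 2 + 4 * t * M2)) / (4 * σ2 * t)
      - 1 / (2 * σ2)) :
    (1 + 2 * σ2 * νs) ^ (-(K : ℝ) / 2) * Real.exp (νs * t - νs * M2 / (1 + 2 * σ2 * νs)) =
      Real.exp ((-lam * (ρ + K) - ρ + Real.sqrt ((K : ℝ) ^ 2 + 4 * lam * ρ * (ρ + K))) / 2) /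
        (((K + Real.sqrt ((K : ℝ) ^ 2 + 4 * lam * ρ * (ρ + K))) / (2 * lam * (ρ + K)))
          ^ ((K : ℝ) / 2)) := by
  have hlam0 := hlam.1
  have hρ0 : 0 < ρ := hρ ▸ div_pos hM hσ
  have ht0 : 0 < t := by rw [ht]; positivity
  set S := √((K : ℝ) ^ 2 + 4 * lam * ρ * (ρ + K))
  set D := √((K : ℝ) ^ 2 * σ2 ^ 2 + 4 * t * M2)
  have hS0 : 0 < S := Real.sqrt_pos.mpr (by positivity)
  have hD : D = σ2 * S := sqrt_discrim_eq_mul_sqrt hσ hρ ht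
  have hA : 1 + 2 * σ2 * νs = (K * σ2 + D) / (2 * t) := by
    rw [hνs]; field_simp; ring
  have hA' : (K * σ2 + D) / (2 * t) = (K + S) / (2 * lam * (ρ + K)) := by
    rw [hD, ht, hρ]; field_simp
  have hroot : t * ((K * σ2 + D) / (2 * t)) ^ 2 - K * σ2 * ((K * σ2 + D) / (2 * t)) - M2 = 0 := by
    simpa only [D, mul_pow] using
      quadratic_formula_root_eq_zero (b := K * σ2) (c := M2) ht0.ne' (by positivity)
  have hApos : 0 < (K + S) / (2 * lam * (ρ + K)) := by positivity
  have hexp : νs * t - νs * M2 / (1 + 2 * σ2 * νs) = (-lam * (ρ + K) - ρ + S) / 2 := by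
    rw [hA, exponent_eq_of_quadratic_root hσ.ne' (hA' ▸ hApos.ne') hroot hA, hD, ht, hρ]
    field_simp
    ring
  rw [hexp, hA, hA', neg_div, Real.rpow_neg hApos.le]
  ring

/-- substituting t = λ(M²+Kσ²) and the optimal ν* into s(ν*,t) yields an
expression depending only on λ, ρ = M²/σ², and K. -/
theorem stmt12 (K : ℕ) (hK : 0 < K) (σ2 M2 lam : ℝ) (hσ : 0 < σ2) (hM : 0 < M2)
    (hlam : lam ∈ Ioo (0 : ℝ) 1)
    (ρ : ℝ) (hρ : ρ = M2 / σ2)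
    (t : ℝ) (ht : t = lam * (M2 + K * σ2))
    (νs : ℝ)
    (hνs : νs = (K * σ2 + Real.sqrt ((K : ℝ) ^ 2 * σ2 ^ 2 + 4 * t * M2)) / (4 * σ2 * t)
      - 1 / (2 * σ2)) :
    (1 + 2 * σ2 * νs) ^ (-(K : ℝ) / 2) * Real.exp (νs * t - νs * M2 / (1 + 2 * σ2 * νs)) =
      Real.exp ((-lam * (ρ + K) - ρ + Real.sqrt ((K : ℝ) ^ 2 + 4 * lam * ρ * (ρ + K))) / 2) /
        (((K + Real.sqrt ((K : ℝ) ^ 2 + 4 * lam * ρ * (ρ + K))) / (2 * lam * (ρ + K)))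
          ^ ((K : ℝ) / 2)) :=
  stmt12_general K σ2 M2 lam hσ hM hlam ρ hρ t ht νs hνs
end

section
/- (Diversity order) With ρ = ρ₀K for a fixed constant ρ₀ > 0, the optimized Chernoff bound can be written as ε = [ (1+√(1+4λ(ρ₀²+ρ₀)))/(2λ(ρ₀+1)) · exp(λ(ρ₀+1) + ρ₀ − √(1+4λ(ρ₀²+ρ₀))) ]^{−K/2}; in particular, for fixed λ ∈ (0,1) and ρ₀ > 0, ε decays exponentially in K with rate (1/2)·ln of the bracketed quantity, and the bracketed quantity is ≥ 1. -/
open Set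

set_option maxHeartbeats 1000000 in
/-- Diversity order: with ρ = ρ₀K, the optimized Chernoff bound satisfies
ε = B^{−K/2}, where B = (1+√(1+4λ(ρ₀²+ρ₀)))/(2λ(ρ₀+1)) · exp(λ(ρ₀+1)+ρ₀−√(1+4λ(ρ₀²+ρ₀)))
and B ≥ 1, so ε decays exponentially in K. -/
theorem stmt17 (K : ℕ) (hK : 0 < K) (ρ0 lam : ℝ) (hρ0 : 0 < ρ0) (hlam : lam ∈ Ioo (0 : ℝ) 1)
    (ρ : ℝ) (hρ : ρ = ρ0 * K)
    (ε : ℝ)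
    (hε : ε = Real.exp ((-lam * (ρ + K) - ρ +
          Real.sqrt ((K : ℝ) ^ 2 + 4 * lam * ρ * (ρ + K))) / 2) /
        (((K + Real.sqrt ((K : ℝ) ^ 2 + 4 * lam * ρ * (ρ + K))) / (2 * lam * (ρ + K)))
          ^ ((K : ℝ) / 2)))
    (B : ℝ)
    (hB : B = (1 + Real.sqrt (1 + 4 * lam * (ρ0 ^ 2 + ρ0))) / (2 * lam * (ρ0 + 1)) *
        Real.exp (lam * (ρ0 + 1) + ρ0 - Real.sqrt (1 + 4 * lam * (ρ0 ^ 2 + ρ0)))) :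
    ε = B ^ (-(K : ℝ) / 2) ∧ 1 ≤ B := by
  obtain ⟨hl0, hl1⟩ := hlam
  have hK0 : (0:ℝ) < K := by exact_mod_cast hK
  set s := Real.sqrt (1 + 4 * lam * (ρ0 ^ 2 + ρ0)) with hs
  have harg : (0:ℝ) ≤ 1 + 4 * lam * (ρ0 ^ 2 + ρ0) := by nlinarith
  have hs2 : s ^ 2 = 1 + 4 * lam * (ρ0 ^ 2 + ρ0) := Real.sq_sqrt harg
  have hsnn : 0 ≤ s := Real.sqrt_nonneg _
  have hs1 : 1 ≤ s := by nlinarith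
  have hsqrt : Real.sqrt ((K : ℝ) ^ 2 + 4 * lam * ρ * (ρ + K)) = K * s := by
    rw [hρ, hs,
      show (K:ℝ)^2 + 4*lam*(ρ0*K)*(ρ0*K+K) = (K:ℝ)^2 * (1 + 4*lam*(ρ0^2+ρ0)) by ring,
      Real.sqrt_mul (sq_nonneg _), Real.sqrt_sq hK0.le]
  set a := lam * (ρ0 + 1) with ha
  have ha0 : 0 < a := by rw [ha]; positivity
  set x := (1 + s) / (2 * lam * (ρ0 + 1)) with hx
  have hx0 : 0 < x := by
    rw [hx]
    have : (0:ℝ) < 1 + s := by linarith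
    positivity
  set d := lam * (ρ0 + 1) + ρ0 - s with hd
  have hBxd : B = x * Real.exp d := by rw [hB]
  -- the identity
  have hbase : ((K:ℝ) + Real.sqrt ((K : ℝ) ^ 2 + 4 * lam * ρ * (ρ + K))) / (2 * lam * (ρ + K))
      = x := by
    rw [hsqrt, hρ, hx]
    rw [div_eq_div_iff (by positivity) (by positivity)]
    ring
  have hnum : (-lam * (ρ + K) - ρ + Real.sqrt ((K : ℝ) ^ 2 + 4 * lam * ρ * (ρ + K))) / 2
      = d * (-(K:ℝ)/2) := by
    rw [hsqrt, hρ, hd]; ring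
  have hεeq : ε = B ^ (-(K : ℝ) / 2) := by
    rw [hε, hnum, hbase, hBxd, Real.mul_rpow hx0.le (Real.exp_pos d).le,
      Real.rpow_def_of_pos (Real.exp_pos d), Real.log_exp,
      show -(K:ℝ)/2 = -((K:ℝ)/2) by ring, Real.rpow_neg hx0.le, div_eq_mul_inv]
    ring
  refine ⟨hεeq, ?_⟩
  -- B ≥ 1
  have hsx : s = 2*a*x - 1 := by
    rw [hx, ha]
    field_simp
    ring
  have key : 4*a*(a*x^2-x) = 4*a*ρ0 := by
    have h := hs2
    rw [hsx] at h
    linear_combination h + 4*ρ0*ha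
  have hρ0x : ρ0 = a*x^2 - x := by
    have := mul_left_cancel₀ (by positivity : (4*a:ℝ) ≠ 0)
      (by linarith [key] : (4*a) * (a*x^2-x) = (4*a) * ρ0)
    linarith
  have hax : 1 < a*x := by nlinarith
  have hd2 : d = a*(x-1)^2 + (1-x) := by
    rw [hd, hsx]
    linear_combination hρ0x + ha
  have haxinv : x⁻¹ ≤ a := by
    rw [inv_eq_one_div, div_le_iff₀ hx0]
    linarith
  have h2 : x⁻¹ - 1 ≤ d := by
    rw [hd2]
    have e1 : x⁻¹ * (x-1)^2 ≤ a * (x-1)^2 :=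
      mul_le_mul_of_nonneg_right haxinv (sq_nonneg _)
    have e2 : x⁻¹ * (x-1)^2 = x - 2 + x⁻¹ := by
      field_simp
      ring
    linarith
  have h1 : x⁻¹ ≤ Real.exp d := by
    have h3 := Real.add_one_le_exp (x⁻¹ - 1)
    have h4 : Real.exp (x⁻¹ - 1) ≤ Real.exp d := Real.exp_le_exp.2 h2
    linarith
  calc (1:ℝ) = x * x⁻¹ := (mul_inv_cancel₀ hx0.ne').symm
    _ ≤ x * Real.exp d := mul_le_mul_of_nonneg_left h1 hx0.le
    _ = B := hBxd.symm
end
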